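/- Let $U, V, W$ be finite-dimensional vector spaces over $\mathbb{Z}/2$, let $\Delta : U \to V$ and $\alpha : V \to W$ be linear maps with $\operatorname{im}\Delta = \ker\alpha$, and suppose there are isomorphisms $\phi_U : U \to W^*$, $\phi_V : V \to V^*$, $\phi_W : W \to U^*$ such that the diagram commutes: $\phi_V \circ \Delta = \alpha^* \circ \phi_U$ and $\phi_W \circ \alpha = \Delta^* \circ \phi_V$, where $\alpha^* : W^* \to V^*$ and $\Delta^* : V^* \to U^*$ are the dual maps, and the pairing $\phi_V$ is symmetric (i.e. $\phi_V(x)(y) = \phi_V(y)(x)$). Then $\dim V = 2 \dim(\ker \alpha)$; in particular $\dim V$ is even. -/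
import Mathlib


open Module LinearMap

/-- Thom's middle-dimension argument: given an exact sequence `U → V → W` of
finite-dimensional `ℤ/2` vector spaces mapping to its dual sequence by
isomorphisms (with the middle pairing symmetric), `dim V = 2 dim (ker α)`;
in particular `dim V` is even. -/
theorem dim_middle_eq_two_dim_ker
    (U V W : Type*) [AddCommGroup U] [Module (ZMod 2) U] [FiniteDimensional (ZMod 2) U]
    [AddCommGroup V] [Module (ZMod 2) V] [FiniteDimensional (ZMod 2) V]
    [AddCommGroup W] [Module (ZMod 2) W] [FiniteDimensional (ZMod 2) W]
    (Δ : U →ₗ[ZMod 2] V) (α : V →ₗ[ZMod 2] W)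
    (hexact : LinearMap.range Δ = LinearMap.ker α)
    (φU : U ≃ₗ[ZMod 2] Dual (ZMod 2) W) (φV : V ≃ₗ[ZMod 2] Dual (ZMod 2) V)
    (φW : W ≃ₗ[ZMod 2] Dual (ZMod 2) U)
    (hsq1 : (φV : V →ₗ[ZMod 2] Dual (ZMod 2) V) ∘ₗ Δ =
      α.dualMap ∘ₗ (φU : U →ₗ[ZMod 2] Dual (ZMod 2) W))
    (hsq2 : (φW : W →ₗ[ZMod 2] Dual (ZMod 2) U) ∘ₗ α =
      Δ.dualMap ∘ₗ (φV : V →ₗ[ZMod 2] Dual (ZMod 2) V))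
    (hsym : ∀ x y : V, φV x y = φV y x) :
    finrank (ZMod 2) V = 2 * finrank (ZMod 2) (LinearMap.ker α) := by
  have h1 : (LinearMap.ker α).map (φV : V →ₗ[ZMod 2] Dual (ZMod 2) V)
      = (LinearMap.ker α).dualAnnihilator := by
    rw [← hexact, ← LinearMap.range_comp, hsq1, LinearMap.range_comp,
      LinearEquiv.range, Submodule.map_top, range_dualMap_eq_dualAnnihilator_ker, hexact]
  have h2 : finrank (ZMod 2) (LinearMap.ker α)
      = finrank (ZMod 2) (LinearMap.ker α).dualAnnihilator := by
    rw [← h1, LinearEquiv.finrank_map_eq]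
  have h4 : finrank (ZMod 2) (LinearMap.ker α).dualAnnihilator
      = finrank (ZMod 2) (V ⧸ LinearMap.ker α) := by
    rw [← LinearEquiv.finrank_eq (Submodule.dualQuotEquivDualAnnihilator (LinearMap.ker α))]
    exact Subspace.dual_finrank_eq
  have h3 := Submodule.finrank_quotient_add_finrank (LinearMap.ker α)
  omega
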